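/- In the orthographic construction (P, P', Δ, z', ê_0, Ê ⊆ Ê(Δ, ê_0)∖{ê_0}, with graph Γ and biased graph Ω_0(Ê)): for every S ⊆ E, the projective rank of the point set Ŝ equals rk_Γ(S) if S is balanced and rk_Γ(S) + 1 if S is unbalanced, where rk_Γ is the rank function of the graphic (cycle) matroid of Γ. -/

import Mathlib

open scoped Classical

/-! ## Graphs with parallel links and half edges -/

/-- A multigraph: each edge has a finite set of endpoints
(one endpoint for a half edge, two endpoints for a link). -/
structure MGraph (N : Type*) (E : Type*) where
  ends : E → Finset N

namespace MGraph

variable {N E : Type*} (G : MGraph N E)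

/-- A link has two distinct endpoints. -/
def IsLink (e : E) : Prop := (G.ends e).card = 2

/-- A half edge has exactly one endpoint. -/
def IsHalfEdge (e : E) : Prop := (G.ends e).card = 1

/-- The set of nodes of a set of edges. -/
def nodeSet (S : Set E) : Set N := {v | ∃ e ∈ S, v ∈ G.ends e}

/-- The nodes of a finite set of edges. -/
noncomputable def nodesOf (S : Finset E) : Finset N := S.biUnion G.ends

/-- The degree of a node in a finite edge set. -/
noncomputable def degreeIn (S : Finset E) (v : N) : ℕ :=
  (S.filter (fun e => v ∈ G.ends e)).card

/-- Two nodes joined by an edge of `S`. -/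
def adjIn (S : Set E) (u v : N) : Prop := ∃ e ∈ S, u ∈ G.ends e ∧ v ∈ G.ends e

/-- Connectivity of nodes through edges of `S`. -/
def nodeConn (S : Set E) : N → N → Prop := Relation.ReflTransGen (G.adjIn S)

/-- The components of the spanning subgraph `(N, S)`, as sets of nodes. -/
def components (S : Set E) : Set (Set N) := {W | ∃ v : N, W = {u | G.nodeConn S u v}}

/-- The number of components of the spanning subgraph `(N, S)`. -/
noncomputable def numComponents (S : Set E) : ℕ := Nat.card ↥(G.components S)

/-- The components of the non-spanning subgraph `(N(S), S)`. -/
def componentsOn (S : Set E) : Set (Set N) :=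
  {W | ∃ v ∈ G.nodeSet S, W = {u | G.nodeConn S u v}}

/-- The edges of `S` whose endpoints all lie in a node set `W`. -/
def edgesIn (S : Set E) (W : Set N) : Set E := {e | e ∈ S ∧ ∀ v ∈ G.ends e, v ∈ W}

/-- An edge set is connected if any two of its edges are joined through
consecutively intersecting edges of the set. -/
def ConnEdges (S : Set E) : Prop :=
  ∀ e ∈ S, ∀ f ∈ S, Relation.ReflTransGen
    (fun a b => a ∈ S ∧ b ∈ S ∧ ∃ v : N, v ∈ G.ends a ∧ v ∈ G.ends b) e f

/-- A circle: the edge set of a connected subgraph in which every node has degree 2. -/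
def IsCircle (C : Finset E) : Prop :=
  C.Nonempty ∧ (∀ e ∈ C, G.IsLink e) ∧ G.ConnEdges ↑C ∧
    ∀ v ∈ G.nodesOf C, G.degreeIn C v = 2

/-- A (simple, open) path joining two distinct nodes `u` and `v`. -/
def IsPath (Q : Finset E) (u v : N) : Prop :=
  Q.Nonempty ∧ u ≠ v ∧ (∀ e ∈ Q, G.IsLink e) ∧ G.ConnEdges ↑Q ∧
    u ∈ G.nodesOf Q ∧ v ∈ G.nodesOf Q ∧
    G.degreeIn Q u = 1 ∧ G.degreeIn Q v = 1 ∧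
    ∀ w ∈ G.nodesOf Q, w ≠ u → w ≠ v → G.degreeIn Q w = 2

/-- A simple graph: all edges are links and no two edges have the same endpoints. -/
def IsSimple : Prop := (∀ e : E, G.IsLink e) ∧ Function.Injective G.ends

/-- The graph is connected. -/
def IsConnected : Prop := ∀ u v : N, G.nodeConn Set.univ u v

/-- Inseparable graph: connected, and for every partition of the edge set into two
nonempty parts the two parts share at least two nodes. -/
def IsInseparable : Prop :=
  G.IsConnected ∧ ∀ A B : Set E, A.Nonempty → B.Nonempty → Disjoint A B →
    A ∪ B = Set.univ → ∃ u v : N, u ≠ v ∧ u ∈ G.nodeSet A ∧ u ∈ G.nodeSet B ∧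
      v ∈ G.nodeSet A ∧ v ∈ G.nodeSet B

/-- A linear class of circles: every member is a circle and no theta subgraph (the
union of three pairwise internally disjoint paths with the same two endpoints)
contains exactly two members of the class. -/
def IsLinearClass (B : Set (Finset E)) : Prop :=
  (∀ C ∈ B, G.IsCircle C) ∧
  ∀ u v : N, ∀ P₁ P₂ P₃ : Finset E,
    G.IsPath P₁ u v → G.IsPath P₂ u v → G.IsPath P₃ u v →
    Disjoint P₁ P₂ → Disjoint P₁ P₃ → Disjoint P₂ P₃ →
    (↑(G.nodesOf P₁) ∩ ↑(G.nodesOf P₂) : Set N) = {u, v} →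
    (↑(G.nodesOf P₁) ∩ ↑(G.nodesOf P₃) : Set N) = {u, v} →
    (↑(G.nodesOf P₂) ∩ ↑(G.nodesOf P₃) : Set N) = {u, v} →
    P₁ ∪ P₂ ∈ B → P₁ ∪ P₃ ∈ B → P₂ ∪ P₃ ∈ B

/-- A balanced edge set with respect to a class `B` of balanced circles:
no half edges, and every circle inside it belongs to `B`. -/
def IsBalancedSet (B : Set (Finset E)) (S : Set E) : Prop :=
  (∀ e ∈ S, G.IsLink e) ∧ ∀ C : Finset E, ↑C ⊆ S → G.IsCircle C → C ∈ B

/-- The number of balanced components of the spanning subgraph `(N, S)`. -/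
noncomputable def numBalComponents (B : Set (Finset E)) (S : Set E) : ℕ :=
  Nat.card ↥{W : Set N | W ∈ G.components S ∧ G.IsBalancedSet B (G.edgesIn S W)}

/-- Frame matroid rank function: `rk S = #N - b(S)`. -/
noncomputable def frameRk [Fintype N] (B : Set (Finset E)) (S : Set E) : ℕ :=
  Fintype.card N - G.numBalComponents B S

/-- Graphic (cycle) matroid rank function: `rk S = #N - c(S)`. -/
noncomputable def graphicRk [Fintype N] (S : Set E) : ℕ :=
  Fintype.card N - G.numComponents S

/-- Graphic matroid rank of a finite edge set, computed inside its own node set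
(valid also for infinite graphs): `rk S = #N(S) - c(N(S), S)`. -/
noncomputable def graphicRkOn (S : Finset E) : ℕ :=
  (G.nodesOf S).card - Nat.card ↥(G.componentsOn ↑S)

/-- Extended lift matroid rank function on `E ⊕ Unit`, where `Sum.inr ()` is the
extra point `e₀`: `rk S = #N - c(S ∩ E)` if `S ⊆ E` is balanced, and
`#N - c(S ∩ E) + 1` if `S` is unbalanced or contains `e₀`. -/
noncomputable def liftRk [Fintype N] (B : Set (Finset E)) (S : Set (E ⊕ Unit)) : ℕ :=
  if G.IsBalancedSet B {e | Sum.inl e ∈ S} ∧ Sum.inr () ∉ S then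
    Fintype.card N - G.numComponents {e | Sum.inl e ∈ S}
  else Fintype.card N - G.numComponents {e | Sum.inl e ∈ S} + 1

/-- Closed sets of the frame matroid (via the rank function; the matroid is finitary). -/
def FrameClosed [Fintype N] (B : Set (Finset E)) (S : Set E) : Prop :=
  ∀ e : E, (∃ S₀ : Finset E, ↑S₀ ⊆ S ∧
    G.frameRk B ↑(insert e S₀) = G.frameRk B ↑S₀) → e ∈ S

/-- Closed sets of the extended lift matroid. -/
def LiftClosed [Fintype N] (B : Set (Finset E)) (S : Set (E ⊕ Unit)) : Prop :=
  ∀ x : E ⊕ Unit, (∃ S₀ : Finset (E ⊕ Unit), ↑S₀ ⊆ S ∧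
    G.liftRk B ↑(insert x S₀) = G.liftRk B ↑S₀) → x ∈ S

/-- The balance-closure of an edge set. -/
def bcl (B : Set (Finset E)) (S : Set E) : Set E :=
  S ∪ {e | ∃ C ∈ B, e ∈ C ∧ ↑C ⊆ S ∪ {e}}

/-- The subgraph of all links, as a graph on the same nodes. -/
def linkGraph : MGraph N {e : E // G.IsLink e} := ⟨fun e => G.ends e.val⟩

/-- Restriction of a class of circles to the subgraph of links. -/
def linkBal (B : Set (Finset E)) : Set (Finset {e : E // G.IsLink e}) :=
  {C | C.image Subtype.val ∈ B}

/-- The subgraph on a subset of the edges (spanning all nodes). -/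
def sub (D : Set E) : MGraph N ↥D := ⟨fun f => G.ends f.val⟩

end MGraph

/-- A graph together with a distinguished class of "balanced" circles.
(It is a biased graph when the class is a linear class.) -/
structure BiasedGraph (N E : Type*) extends MGraph N E where
  Bal : Set (Finset E)

/-- The complete graph on a node set `N`. -/
def completeMGraph (N : Type*) : MGraph N {q : Finset N // q.card = 2} := ⟨Subtype.val⟩

/-- A gain graph with gain group `Γ`: each edge is given by a source, a target
(equal for a half edge) and a gain in the direction from source to target. -/
structure GainGraph (N E : Type*) (Γ : Type*) [Group Γ] extends MGraph N E where
  src : E → N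
  tgt : E → N
  gain : E → Γ
  ends_eq : ∀ e : E, ends e = {src e, tgt e}

namespace GainGraph

variable {N E Γ : Type*} [Group Γ] (Φ : GainGraph N E Γ)

/-- The gain of an edge in the direction from `u` to `v`. -/
noncomputable def ogain (e : E) (u v : N) : Γ :=
  if Φ.src e = u ∧ Φ.tgt e = v then Φ.gain e else (Φ.gain e)⁻¹

/-- A balanced circle of a gain graph: a circle whose gain function is given by a
potential on the nodes (equivalently, the product of its gains along a cyclic
orientation is the identity). -/
def BalancedCircle (C : Finset E) : Prop :=
  Φ.toMGraph.IsCircle C ∧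
    ∃ θ : N → Γ, ∀ e ∈ C, Φ.gain e = (θ (Φ.src e))⁻¹ * θ (Φ.tgt e)

/-- The biased graph `⟨Φ⟩` of a gain graph. -/
def biasedGraph : BiasedGraph N E := { Φ.toMGraph with Bal := {C | Φ.BalancedCircle C} }

end GainGraph

/-- A biased expansion of a graph `Δ` along a projection `p`: `p` is surjective,
preserves endpoints, and every circle of `Δ` with a chosen lift of all but one of
its edges has a unique completion to a balanced circle. -/
def IsBiasedExpansion {N E E' : Type*} (G : MGraph N E) (B : Set (Finset E))
    (Δ : MGraph N E') (p : E → E') : Prop :=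
  Function.Surjective p ∧ (∀ e : E, G.ends e = Δ.ends (p e)) ∧
  ∀ C : Finset E', Δ.IsCircle C → ∀ e₀ ∈ C, ∀ s : E' → E,
    (∀ f ∈ C.erase e₀, p (s f) = f) →
    ∃! t : E, p t = e₀ ∧ (C.erase e₀).image s ∪ {t} ∈ B

/-! ## Axiomatic (synthetic) projective geometry -/

/-- An axiomatic projective geometry: a point set with a line through any two
points, unique when the points are distinct, every line having at least three
points, and satisfying the Veblen–Young axiom. -/
structure ProjGeom (P : Type*) where
  line : P → P → Set P
  line_self : ∀ p : P, line p p = {p}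
  line_symm : ∀ p q : P, line p q = line q p
  left_mem_line : ∀ p q : P, p ∈ line p q
  right_mem_line : ∀ p q : P, q ∈ line p q
  line_unique : ∀ p q x y : P, p ≠ q → x ∈ line p q → y ∈ line p q → x ≠ y →
    line x y = line p q
  exists_third : ∀ p q : P, p ≠ q → ∃ r ∈ line p q, r ≠ p ∧ r ≠ q
  veblen : ∀ p q r s x : P, p ≠ q → r ≠ s → p ≠ r → q ≠ s →
    x ∈ line p q → x ∈ line r s → ∃ y, y ∈ line p r ∧ y ∈ line q s

namespace ProjGeom

variable {P : Type*} (G : ProjGeom P)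

/-- A flat (subspace): a line-closed set of points. -/
def IsFlat (t : Set P) : Prop := ∀ p ∈ t, ∀ q ∈ t, G.line p q ⊆ t

/-- The span of a point set: the smallest flat containing it. -/
def span (A : Set P) : Set P := ⋂₀ {t : Set P | G.IsFlat t ∧ A ⊆ t}

/-- An independent point set: no point is in the span of the others. -/
def Indep (A : Set P) : Prop := ∀ a ∈ A, a ∉ G.span (A \ {a})

/-- The (matroid) rank of a point set: the largest cardinality of a finite
independent subset. -/
noncomputable def rank (A : Set P) : ℕ :=
  sSup {n : ℕ | ∃ B : Finset P, ↑B ⊆ A ∧ G.Indep ↑B ∧ B.card = n}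

/-- A hyperplane: a maximal proper flat. -/
def IsHyperplane (h : Set P) : Prop :=
  G.IsFlat h ∧ h ≠ Set.univ ∧ ∀ t : Set P, G.IsFlat t → h ⊆ t → t = h ∨ t = Set.univ

/-- The codimension of a flat: the least number of hyperplanes intersecting in it. -/
noncomputable def codim (t : Set P) : ℕ :=
  sInf {n : ℕ | ∃ H : Finset (Set P), H.card = n ∧ (∀ h ∈ H, G.IsHyperplane h) ∧
    ⋂₀ ↑H = t}

variable {N : Type*}

/-- A cross-flat with respect to an independent family `ν`: a flat containing
none of the points `ν v`. -/
def crossFlat (ν : N → P) (t : Set P) : Prop := G.IsFlat t ∧ ∀ v : N, ν v ∉ t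

/-- The union of all edge lines of the independent family `ν`. -/
def edgeLineUnion (ν : N → P) : Set P :=
  ⋃ (v : N) (w : N) (_ : v ≠ w), G.line (ν v) (ν w)

/-! ### The Menelaean (point) construction for the frame matroid -/

/-- The underlying graph of the Menelaean construction `Ω(N̂, Ehat)`: a point of `Ehat`
in `N̂` is a half edge, any other point is a link joining the ends of its edge line. -/
noncomputable def menGraph (ν : N → P) (Ehat : Set P)
    (hE : ∀ x ∈ Ehat, x ∉ Set.range ν →
      ∃ pr : N × N, pr.1 ≠ pr.2 ∧ x ∈ G.line (ν pr.1) (ν pr.2)) :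
    MGraph N ↥Ehat where
  ends e :=
    if h : (e : P) ∈ Set.range ν then {(show ∃ v : N, ν v = ↑e from h).choose}
    else {(hE e e.2 h).choose.1, (hE e e.2 h).choose.2}

/-- The balanced circles of the Menelaean construction: circles whose point set
lies in a cross-flat. -/
noncomputable def menBal (ν : N → P) (Ehat : Set P)
    (hE : ∀ x ∈ Ehat, x ∉ Set.range ν →
      ∃ pr : N × N, pr.1 ≠ pr.2 ∧ x ∈ G.line (ν pr.1) (ν pr.2)) :
    Set (Finset ↥Ehat) :=
  {C | (G.menGraph ν Ehat hE).IsCircle C ∧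
    ∃ t : Set P, G.crossFlat ν t ∧ ∀ e ∈ C, (e : P) ∈ t}

/-! ### The Cevian (hyperplane) construction for the frame matroid -/

/-- A Cevian arrangement over the point basis `ν`, described by its associated
graph `Γ` and its apex function: a link `e` with endpoints `v, w` has its apex on
the edge line `v̂ŵ`, off the basis; a half edge at `v` has apex `ν v`. -/
def IsCevian {E : Type*} (ν : N → P) (Γ : MGraph N E) (apex : E → P) : Prop :=
  ∀ e : E,
    (∃ v w : N, v ≠ w ∧ Γ.ends e = ({v, w} : Finset N) ∧
      apex e ∈ G.line (ν v) (ν w) ∧ apex e ∉ Set.range ν) ∨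
    (∃ v : N, Γ.ends e = ({v} : Finset N) ∧ apex e = ν v)

/-- The apical hyperplane of an edge of a Cevian arrangement. -/
def cevHyp {E : Type*} (ν : N → P) (Γ : MGraph N E) (apex : E → P) (e : E) : Set P :=
  if Γ.IsLink e then G.span ((ν '' {u : N | u ∉ Γ.ends e}) ∪ {apex e})
  else G.span (ν '' {u : N | u ∉ Γ.ends e})

/-- The rank function of a Cevian arrangement:
the codimension of the intersection of the corresponding apical hyperplanes. -/
noncomputable def cevRk {E : Type*} (ν : N → P) (Γ : MGraph N E) (apex : E → P)
    (S : Finset E) : ℕ :=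
  G.codim (⋂ e ∈ S, G.cevHyp ν Γ apex e)

/-- The balanced circles of a Cevian arrangement:
circles of deficient hyperplane-intersection rank. -/
noncomputable def cevBal {E : Type*} (ν : N → P) (Γ : MGraph N E) (apex : E → P) :
    Set (Finset E) :=
  {C | Γ.IsCircle C ∧ G.cevRk ν Γ apex C < C.card}

/-! ### The orthographic (point) construction for the lift matroid -/

/-- The projection of the orthographic construction: each point of `Ehat` lies on the
edge line `z'(f)e₀` of a unique edge `f` of `Δ`. -/
noncomputable def orthoProj {E' : Type*} (z' : E' → P) (e₀ : P) (Ehat : Set P)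
    (hE : ∀ x ∈ Ehat, ∃ f : E', x ∈ G.line (z' f) e₀) : ↥Ehat → E' :=
  fun e => (hE e e.2).choose

/-- The underlying graph of the orthographic construction `Ω₀(Ehat)`. -/
noncomputable def orthoGraph {E' : Type*} (Δ : MGraph N E') (z' : E' → P) (e₀ : P)
    (Ehat : Set P) (hE : ∀ x ∈ Ehat, ∃ f : E', x ∈ G.line (z' f) e₀) : MGraph N ↥Ehat :=
  ⟨fun e => Δ.ends (G.orthoProj z' e₀ Ehat hE e)⟩

/-- The balanced circles of the orthographic construction:
circles spanning a cross-flat (a flat not containing `e₀`). -/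
noncomputable def orthoBal {E' : Type*} (Δ : MGraph N E') (z' : E' → P) (e₀ : P)
    (Ehat : Set P) (hE : ∀ x ∈ Ehat, ∃ f : E', x ∈ G.line (z' f) e₀) : Set (Finset ↥Ehat) :=
  {C | (G.orthoGraph Δ z' e₀ Ehat hE).IsCircle C ∧
    e₀ ∉ G.span (Subtype.val '' (↑C : Set ↥Ehat))}

end ProjGeom

/-! ### Synthetic affinographic arrangements -/

/-- A synthetic affinographic arrangement of hyperplanes in the affine geometry
obtained from the projective geometry `G` by deleting the ideal hyperplane `hinf`:
a family of hyperplanes `hP e` (given by their projective completions, with affine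
parts `hP e \ hinf`), with parallel classes indexed by the edges of a graph `Δ` with
links only via the surjection `π`; hyperplanes in the class of `f` have common
ideal part `ideal f`, and the matroid of the ideal parts (rank = codimension inside
`hinf`) is the graphic matroid of `Δ`. -/
def IsAffinographic {P N E E' : Type*} [Fintype N] (G : ProjGeom P) (hinf : Set P)
    (hP : E → Set P) (Δ : MGraph N E') (π : E → E') (ideal : E' → Set P) : Prop :=
  G.IsHyperplane hinf ∧ (∀ f : E', Δ.IsLink f) ∧ Function.Surjective π ∧
  Function.Injective hP ∧ Function.Injective ideal ∧
  (∀ e : E, G.IsHyperplane (hP e) ∧ hP e ≠ hinf ∧ hP e ∩ hinf = ideal (π e)) ∧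
  ∀ S : Finset E', Δ.graphicRk (↑S : Set E') = G.codim (hinf ∩ ⋂ f ∈ S, ideal f) - 1

/-- The underlying graph of the biased graph `Ω(A)` of an affinographic
arrangement: each edge of `Δ` is replaced by the edges of its parallel class. -/
def affinoGraph {N E E' : Type*} (Δ : MGraph N E') (π : E → E') : MGraph N E :=
  ⟨fun e => Δ.ends (π e)⟩

/-- The affine intersection `t_A(S)` of the hyperplanes of `S`. -/
def affInter {P E : Type*} (hinf : Set P) (hP : E → Set P) (S : Set E) : Set P :=
  ⋂ e ∈ S, (hP e \ hinf)

/-- The balanced circles of `Ω(A)`: digons over a single edge of `Δ` are unbalanced;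
any other circle is balanced iff its affine intersection is nonempty. -/
def affinoBal {P N E E' : Type*} (_G : ProjGeom P) (hinf : Set P) (hP : E → Set P)
    (Δ : MGraph N E') (π : E → E') : Set (Finset E) :=
  {C | (affinoGraph Δ π).IsCircle C ∧ ¬(∃ f : E', ∀ e ∈ C, π e = f) ∧
    (affInter hinf hP ↑C).Nonempty}

/-! ### Coordinatized projective spaces -/

/-- The rank of a finite set of points of a coordinatized projective space:
the dimension of the linear span of representative vectors. -/
noncomputable def projRank (F : Type*) {V : Type*} [DivisionRing F] [AddCommGroup V]
    [Module F V] (A : Finset (Projectivization F V)) : ℕ :=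
  Module.finrank F ↥(Submodule.span F (Projectivization.rep '' (↑A : Set (Projectivization F V))))

/-- The edge set of the full biased graph `Ω^•`: the edges of `Ω` together with a
new half edge at every node not already supporting one. -/
def FullE {N E : Type*} (Ω : BiasedGraph N E) : Type _ :=
  E ⊕ {v : N // ∀ e : E, Ω.ends e ≠ ({v} : Finset N)}

/-- The underlying graph of the full biased graph `Ω^•`. -/
def fullGraph {N E : Type*} (Ω : BiasedGraph N E) : MGraph N (FullE Ω) :=
  ⟨Sum.elim Ω.ends (fun v => {v.val})⟩

/-- The balanced circles of the full biased graph `Ω^•` (circles avoid half edges). -/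
def fullBal {N E : Type*} (Ω : BiasedGraph N E) : Set (Finset (FullE Ω)) :=
  {C | ∃ C₀ ∈ Ω.Bal, C = C₀.image Sum.inl}

/-! ## Auxiliary counting lemmas -/

section AuxCount

open Set

lemma aux_ncard_range_le {α β γ : Type*} (f : α → β) (g : α → γ)
    (hfin : (Set.range f).Finite)
    (h : ∀ u v : α, f u = f v → g u = g v) :
    (Set.range g).ncard ≤ (Set.range f).ncard := by
  classical
  rcases isEmpty_or_nonempty α with hα | hα
  · rw [Set.range_eq_empty g]; simp
  · obtain ⟨a0⟩ := hα
    set F : β → γ := fun x => if h' : ∃ u, f u = x then g h'.choose else g a0 with hF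
    have hsub : Set.range g ⊆ F '' Set.range f := by
      rintro _ ⟨u, rfl⟩
      refine ⟨f u, ⟨u, rfl⟩, ?_⟩
      have h' : ∃ w, f w = f u := ⟨u, rfl⟩
      simp only [hF, dif_pos h']
      exact h _ _ h'.choose_spec
    calc (Set.range g).ncard ≤ (F '' Set.range f).ncard :=
          Set.ncard_le_ncard hsub (hfin.image F)
      _ ≤ (Set.range f).ncard := Set.ncard_image_le hfin

lemma aux_ncard_range_le_add_one {α β γ : Type*} (f : α → β) (g : α → γ) (a b : α)
    (hfinf : (Set.range f).Finite) (hfing : (Set.range g).Finite)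
    (hdec : ∀ u w : α, g u = g w →
      f u = f w ∨ (f u = f a ∧ f w = f b) ∨ (f u = f b ∧ f w = f a)) :
    (Set.range f).ncard ≤ (Set.range g).ncard + 1 := by
  classical
  set F : β → γ := fun x => if h' : ∃ u, f u = x then g h'.choose else g a with hF
  have hmaps : ∀ x ∈ Set.range f \ {f b}, F x ∈ Set.range g := by
    rintro x ⟨⟨u, rfl⟩, _⟩
    have h' : ∃ w, f w = f u := ⟨u, rfl⟩
    simp only [hF, dif_pos h']
    exact ⟨_, rfl⟩
  have hinj : Set.InjOn F (Set.range f \ {f b}) := by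
    rintro x ⟨⟨u, rfl⟩, hub⟩ y ⟨⟨w, rfl⟩, hwb⟩ hFeq
    have hu' : ∃ t, f t = f u := ⟨u, rfl⟩
    have hw' : ∃ t, f t = f w := ⟨w, rfl⟩
    simp only [hF, dif_pos hu', dif_pos hw'] at hFeq
    rcases hdec _ _ hFeq with h | ⟨h1, h2⟩ | ⟨h1, h2⟩
    · rw [← hu'.choose_spec, ← hw'.choose_spec, h]
    · exact absurd (Set.mem_singleton_iff.mpr (by rw [← hw'.choose_spec, h2])) hwb
    · exact absurd (Set.mem_singleton_iff.mpr (by rw [← hu'.choose_spec, h1])) hub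
  have h1 : (Set.range f \ {f b}).ncard ≤ (Set.range g).ncard :=
    Set.ncard_le_ncard_of_injOn F hmaps hinj hfing
  have h2 : (Set.range f).ncard ≤ (Set.range f \ {f b}).ncard + 1 := by
    have hss : Set.range f ⊆ insert (f b) (Set.range f \ {f b}) := by
      intro x hx
      by_cases hxb : x = f b
      · exact hxb ▸ Set.mem_insert _ _
      · exact Set.mem_insert_of_mem _ ⟨hx, hxb⟩
    calc (Set.range f).ncard ≤ (insert (f b) (Set.range f \ {f b})).ncard :=
          Set.ncard_le_ncard hss (hfinf.diff.insert _)
      _ ≤ (Set.range f \ {f b}).ncard + 1 := Set.ncard_insert_le _ _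
  omega

lemma aux_ncard_range_add_one_le {α β γ : Type*} (f : α → β) (g : α → γ) (v a : α)
    (hfin : (Set.range f).Finite)
    (hfg : ∀ u w : α, f u = f w → g u = g w)
    (hga : g a = g v) (hfa : f a ≠ f v) :
    (Set.range g).ncard + 1 ≤ (Set.range f).ncard := by
  classical
  set F : γ → β := fun x => if h' : ∃ u, g u = x then
      (if f h'.choose = f v then f a else f h'.choose) else f a with hF
  have hmaps : ∀ x ∈ Set.range g, F x ∈ Set.range f \ {f v} := by
    rintro _ ⟨u, rfl⟩
    have h' : ∃ w, g w = g u := ⟨u, rfl⟩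
    simp only [hF, dif_pos h']
    by_cases hc : f h'.choose = f v
    · rw [if_pos hc]; exact ⟨⟨a, rfl⟩, hfa⟩
    · rw [if_neg hc]; exact ⟨⟨h'.choose, rfl⟩, hc⟩
  have hinj : Set.InjOn F (Set.range g) := by
    rintro _ ⟨u, rfl⟩ _ ⟨w, rfl⟩ hFeq
    have hu' : ∃ t, g t = g u := ⟨u, rfl⟩
    have hw' : ∃ t, g t = g w := ⟨w, rfl⟩
    simp only [hF, dif_pos hu', dif_pos hw'] at hFeq
    by_cases hcu : f hu'.choose = f v <;> by_cases hcw : f hw'.choose = f v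
    · rw [← hu'.choose_spec, ← hw'.choose_spec, hfg _ _ hcu, hfg _ _ hcw]
    · rw [if_pos hcu, if_neg hcw] at hFeq
      have c2 : g a = g hw'.choose := hfg _ _ hFeq
      rw [← hu'.choose_spec, ← hw'.choose_spec, hfg _ _ hcu, ← c2, hga]
    · rw [if_neg hcu, if_pos hcw] at hFeq
      have c2 : g a = g hu'.choose := hfg _ _ hFeq.symm
      rw [← hu'.choose_spec, ← hw'.choose_spec, hfg _ _ hcw, ← c2, hga]
    · rw [if_neg hcu, if_neg hcw] at hFeq
      rw [← hu'.choose_spec, ← hw'.choose_spec]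
      exact hfg _ _ hFeq
  have h1 : (Set.range g).ncard ≤ (Set.range f \ {f v}).ncard :=
    Set.ncard_le_ncard_of_injOn F hmaps hinj hfin.diff
  have h2 : (Set.range f \ {f v}).ncard + 1 = (Set.range f).ncard :=
    Set.ncard_diff_singleton_add_one ⟨v, rfl⟩ hfin
  omega

end AuxCount

/-! ## Auxiliary graph lemmas -/

set_option linter.unusedSectionVars false

namespace MGraph

variable {N E : Type*} (H : MGraph N E)

lemma adjIn_symmetric (S : Set E) : Symmetric (H.adjIn S) :=
  fun _ _ ⟨e, he, h1, h2⟩ => ⟨e, he, h2, h1⟩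

lemma nodeConn_mono {S S' : Set E} (h : S ⊆ S') {u v : N} (hc : H.nodeConn S u v) :
    H.nodeConn S' u v :=
  Relation.ReflTransGen.mono (r := H.adjIn S) (p := H.adjIn S')
    (fun _ _ ⟨e, he, h1, h2⟩ => ⟨e, h he, h1, h2⟩) _ _ hc

lemma nodeConn_symm {S : Set E} {u v : N} (h : H.nodeConn S u v) : H.nodeConn S v u :=
  (@Relation.ReflTransGen.symmetric _ _ ⟨fun _ _ hab => H.adjIn_symmetric S hab⟩).symm _ _ h

/-- The connectivity class of a node. -/
def classOf (S : Set E) (v : N) : Set N := {u | H.nodeConn S u v}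

lemma classOf_eq_iff {S : Set E} {u v : N} :
    H.classOf S u = H.classOf S v ↔ H.nodeConn S u v := by
  constructor
  · intro h
    have hu : u ∈ H.classOf S u := Relation.ReflTransGen.refl
    rw [h] at hu
    exact hu
  · intro h
    ext x
    exact ⟨fun hx => Relation.ReflTransGen.trans hx h,
           fun hx => Relation.ReflTransGen.trans hx (H.nodeConn_symm h)⟩

lemma components_eq_range (S : Set E) : H.components S = Set.range (H.classOf S) := by
  ext W
  constructor
  · rintro ⟨v, rfl⟩; exact ⟨v, rfl⟩
  · rintro ⟨v, rfl⟩; exact ⟨v, rfl⟩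

lemma numComponents_eq_ncard (S : Set E) :
    H.numComponents S = (Set.range (H.classOf S)).ncard := by
  have h0 : H.numComponents S = Nat.card ↥(H.components S) := rfl
  rw [h0, components_eq_range, Nat.card_coe_set_eq]

lemma nodeConn_empty {u v : N} (h : H.nodeConn (∅ : Set E) u v) : u = v := by
  rcases Relation.ReflTransGen.cases_tail h with h' | ⟨b, _, hbv⟩
  · exact h'.symm
  · obtain ⟨e, he, _⟩ := hbv
    exact absurd he (Set.notMem_empty e)

lemma nodeConn_isolated {S : Set E} {v : N} (hiso : ∀ m ∈ S, v ∉ H.ends m)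
    {u : N} (h : H.nodeConn S u v) : u = v := by
  rcases Relation.ReflTransGen.cases_tail h with h' | ⟨b, _, hbv⟩
  · exact h'.symm
  · obtain ⟨e, he, _, hv⟩ := hbv
    exact absurd hv (hiso e he)

variable [Fintype N]

lemma numComponents_le_card (S : Set E) : H.numComponents S ≤ Fintype.card N := by
  rw [numComponents_eq_ncard, ← Set.image_univ]
  calc (H.classOf S '' Set.univ).ncard ≤ (Set.univ : Set N).ncard :=
        Set.ncard_image_le (Set.toFinite _)
    _ = Fintype.card N := by rw [Set.ncard_univ, Nat.card_eq_fintype_card]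

lemma numComponents_empty : H.numComponents (∅ : Set E) = Fintype.card N := by
  rw [numComponents_eq_ncard]
  have h : H.classOf (∅ : Set E) = fun v => {v} := by
    funext v
    ext u
    simp only [classOf, Set.mem_setOf_eq, Set.mem_singleton_iff]
    exact ⟨fun h => H.nodeConn_empty h, fun h => h ▸ Relation.ReflTransGen.refl⟩
  rw [h, ← Set.image_univ, Set.ncard_image_of_injective _ Set.singleton_injective,
    Set.ncard_univ, Nat.card_eq_fintype_card]

lemma numComponents_anti {S S' : Set E} (h : S ⊆ S') :
    H.numComponents S' ≤ H.numComponents S := by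
  rw [numComponents_eq_ncard, numComponents_eq_ncard]
  exact aux_ncard_range_le _ _ (Set.toFinite _) (fun u v huv =>
    H.classOf_eq_iff.mpr (H.nodeConn_mono h (H.classOf_eq_iff.mp huv)))

lemma nodeConn_decomp {S : Set E} {e : E} {a b : N} (hends : H.ends e = ({a, b} : Finset N))
    {u w : N} (h : H.nodeConn S u w) :
    H.nodeConn (S \ {e}) u w ∨ (H.nodeConn (S \ {e}) u a ∧ H.nodeConn (S \ {e}) b w) ∨
      (H.nodeConn (S \ {e}) u b ∧ H.nodeConn (S \ {e}) a w) := by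
  induction h with
  | refl => exact Or.inl Relation.ReflTransGen.refl
  | @tail x c h1 h2 ih =>
    obtain ⟨m, hm, hxm, hwm⟩ := h2
    by_cases hme : m = e
    · subst hme
      rw [hends] at hxm hwm
      simp only [Finset.mem_insert, Finset.mem_singleton] at hxm hwm
      have key : ∀ y z : N, (y = a ∨ y = b) → (z = a ∨ z = b) →
          (H.nodeConn (S \ {m}) u y ∨ (H.nodeConn (S \ {m}) u a ∧ H.nodeConn (S \ {m}) b y) ∨
            (H.nodeConn (S \ {m}) u b ∧ H.nodeConn (S \ {m}) a y)) →
          (H.nodeConn (S \ {m}) u z ∨ (H.nodeConn (S \ {m}) u a ∧ H.nodeConn (S \ {m}) b z) ∨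
            (H.nodeConn (S \ {m}) u b ∧ H.nodeConn (S \ {m}) a z)) := by
        rintro y z (rfl | rfl) (rfl | rfl) hP
        · exact hP
        · rcases hP with h | ⟨h1', _⟩ | ⟨h1', _⟩
          · exact Or.inr (Or.inl ⟨h, Relation.ReflTransGen.refl⟩)
          · exact Or.inr (Or.inl ⟨h1', Relation.ReflTransGen.refl⟩)
          · exact Or.inl h1'
        · rcases hP with h | ⟨h1', _⟩ | ⟨h1', _⟩
          · exact Or.inr (Or.inr ⟨h, Relation.ReflTransGen.refl⟩)
          · exact Or.inl h1'
          · exact Or.inr (Or.inr ⟨h1', Relation.ReflTransGen.refl⟩)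
        · exact hP
      exact key x c hxm hwm ih
    · have hstep : H.adjIn (S \ {e}) x c := ⟨m, ⟨hm, hme⟩, hxm, hwm⟩
      rcases ih with h | ⟨ha1, ha2⟩ | ⟨hb1, hb2⟩
      · exact Or.inl (h.tail hstep)
      · exact Or.inr (Or.inl ⟨ha1, ha2.tail hstep⟩)
      · exact Or.inr (Or.inr ⟨hb1, hb2.tail hstep⟩)

lemma numComponents_diff_le {S : Set E} {e : E} {a b : N}
    (hends : H.ends e = ({a, b} : Finset N)) :
    H.numComponents (S \ {e}) ≤ H.numComponents S + 1 := by
  rw [numComponents_eq_ncard, numComponents_eq_ncard]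
  refine aux_ncard_range_le_add_one (H.classOf (S \ {e})) (H.classOf S) a b
    (Set.toFinite _) (Set.toFinite _) ?_
  intro u w huw
  have hconn : H.nodeConn S u w := H.classOf_eq_iff.mp huw
  rcases H.nodeConn_decomp hends hconn with h | ⟨h1, h2⟩ | ⟨h1, h2⟩
  · exact Or.inl (H.classOf_eq_iff.mpr h)
  · exact Or.inr (Or.inl ⟨H.classOf_eq_iff.mpr h1,
      H.classOf_eq_iff.mpr (H.nodeConn_symm h2)⟩)
  · exact Or.inr (Or.inr ⟨H.classOf_eq_iff.mpr h1,
      H.classOf_eq_iff.mpr (H.nodeConn_symm h2)⟩)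

lemma numComponents_add_one_le {D S : Set E} (hDS : D ⊆ S) {a v : N}
    (hconn : H.nodeConn S a v) (hnot : ¬ H.nodeConn D a v) :
    H.numComponents S + 1 ≤ H.numComponents D := by
  rw [numComponents_eq_ncard, numComponents_eq_ncard]
  exact aux_ncard_range_add_one_le (H.classOf D) (H.classOf S) v a (Set.toFinite _)
    (fun u w h => H.classOf_eq_iff.mpr (H.nodeConn_mono hDS (H.classOf_eq_iff.mp h)))
    (H.classOf_eq_iff.mpr hconn) (fun h => hnot (H.classOf_eq_iff.mp h))

lemma card_le_numComponents_add_card (S : Finset E) :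
    (∀ e ∈ S, H.IsLink e) → Fintype.card N ≤ H.numComponents ↑S + S.card := by
  classical
  induction S using Finset.induction_on with
  | empty =>
    intro _
    rw [Finset.coe_empty, H.numComponents_empty]
    simp
  | @insert e S he ih =>
    intro hS
    obtain ⟨a, b, hab, hends⟩ := Finset.card_eq_two.mp (hS e (Finset.mem_insert_self e S))
    have h1 := ih (fun f hf => hS f (Finset.mem_insert_of_mem hf))
    have h2 : H.numComponents ((↑(insert e S) : Set E) \ {e}) ≤
        H.numComponents ↑(insert e S) + 1 := H.numComponents_diff_le hends
    have h3 : (↑(insert e S) : Set E) \ {e} = ↑S := by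
      rw [Finset.coe_insert, Set.insert_diff_self_of_notMem (by exact_mod_cast he)]
    rw [h3] at h2
    rw [Finset.card_insert_of_notMem he]
    omega

lemma handshake (C : Finset E) :
    ∑ v ∈ H.nodesOf C, H.degreeIn C v = ∑ e ∈ C, (H.ends e).card := by
  classical
  unfold degreeIn
  simp_rw [Finset.card_filter]
  rw [Finset.sum_comm]
  refine Finset.sum_congr rfl (fun e he => ?_)
  rw [← Finset.card_filter]
  have hfe : (H.nodesOf C).filter (fun v => v ∈ H.ends e) = H.ends e := by
    ext v
    simp only [Finset.mem_filter, MGraph.nodesOf, Finset.mem_biUnion]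
    exact ⟨fun h => h.2, fun h => ⟨⟨e, he, h⟩, h⟩⟩
  rw [hfe]

lemma connEdges_aux (C : Finset E) {u w : N} (h : H.nodeConn ↑C u w) :
    ∀ e ∈ C, u ∈ H.ends e → ∀ f ∈ C, w ∈ H.ends f →
      Relation.ReflTransGen
        (fun x y => x ∈ (↑C : Set E) ∧ y ∈ (↑C : Set E) ∧
          ∃ v : N, v ∈ H.ends x ∧ v ∈ H.ends y) e f := by
  induction h using Relation.ReflTransGen.head_induction_on with
  | refl =>
    intro e he hu f hf hw
    exact Relation.ReflTransGen.single ⟨by exact_mod_cast he, by exact_mod_cast hf, w, hu, hw⟩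
  | head hstep _ ih =>
    intro e he hu f hf hw
    obtain ⟨g, hg, h1, h2⟩ := hstep
    exact Relation.ReflTransGen.trans
      (Relation.ReflTransGen.single ⟨by exact_mod_cast he, hg, _, hu, h1⟩)
      (ih g (by exact_mod_cast hg) h2 f hf hw)

lemma connEdges_of (C : Finset E)
    (hconn : ∀ u w : N, u ∈ H.nodesOf C → w ∈ H.nodesOf C → H.nodeConn ↑C u w)
    (hne : ∀ e ∈ C, (H.ends e).Nonempty) : H.ConnEdges ↑C := by
  intro e he f hf
  have he' : e ∈ C := by exact_mod_cast he
  have hf' : f ∈ C := by exact_mod_cast hf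
  obtain ⟨u, hu⟩ := hne e he'
  obtain ⟨w, hw⟩ := hne f hf'
  exact H.connEdges_aux C
    (hconn u w (Finset.mem_biUnion.mpr ⟨e, he', hu⟩) (Finset.mem_biUnion.mpr ⟨f, hf', hw⟩))
    e he' hu f hf' hw

/-- A minimal dependent edge set (in the graphic matroid) consisting of links
is a circle. -/
lemma isCircle_of_min (C : Finset E) (hlinks : ∀ e ∈ C, H.IsLink e)
    (hdep : Fintype.card N < H.numComponents ↑C + C.card)
    (hmin : ∀ D : Finset E, D ⊆ C → D ≠ C →
      ¬ (Fintype.card N < H.numComponents ↑D + D.card)) :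
    H.IsCircle C := by
  classical
  have hCne : C.Nonempty := by
    rcases C.eq_empty_or_nonempty with rfl | h
    · rw [Finset.coe_empty, H.numComponents_empty] at hdep
      simp at hdep
    · exact h
  have key : ∀ e ∈ C, H.numComponents ↑(C.erase e) = H.numComponents ↑C ∧
      Fintype.card N + 1 = H.numComponents ↑C + C.card := by
    intro e he
    have h1 := hmin (C.erase e) (Finset.erase_subset e C)
      (fun h => Finset.notMem_erase e C (h.symm ▸ he))
    have h2 := H.card_le_numComponents_add_card (C.erase e)
      (fun f hf => hlinks f (Finset.mem_of_mem_erase hf))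
    have h3 : H.numComponents ↑C ≤ H.numComponents ↑(C.erase e) :=
      H.numComponents_anti (by exact_mod_cast Finset.erase_subset e C)
    have h4 := Finset.card_erase_add_one he
    omega
  obtain ⟨e₁, he₁⟩ := hCne
  have hNC := (key e₁ he₁).2
  -- minimum degree 2
  have hdeg2 : ∀ v ∈ H.nodesOf C, 2 ≤ H.degreeIn C v := by
    intro v hv
    by_contra hlt
    push_neg at hlt
    obtain ⟨e, he, hve⟩ := Finset.mem_biUnion.mp hv
    have hdegpos : 1 ≤ H.degreeIn C v := by
      have hef : e ∈ C.filter (fun f => v ∈ H.ends f) := Finset.mem_filter.mpr ⟨he, hve⟩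
      exact Finset.card_pos.mpr ⟨e, hef⟩
    have hdeg1 : H.degreeIn C v = 1 := by
      have : H.degreeIn C v < 2 := hlt
      omega
    have huniq : ∀ m ∈ C, v ∈ H.ends m → m = e := by
      intro m hm hvm
      by_contra hme
      have hsub : ({m, e} : Finset E) ⊆ C.filter (fun f => v ∈ H.ends f) := by
        intro x hx
        rcases Finset.mem_insert.mp hx with rfl | hx
        · exact Finset.mem_filter.mpr ⟨hm, hvm⟩
        · rw [Finset.mem_singleton] at hx
          subst hx
          exact Finset.mem_filter.mpr ⟨he, hve⟩
      have h2' : 2 ≤ H.degreeIn C v := by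
        calc 2 = ({m, e} : Finset E).card := (Finset.card_pair hme).symm
          _ ≤ _ := Finset.card_le_card hsub
      omega
    obtain ⟨x, y, hxy, hends⟩ := Finset.card_eq_two.mp (hlinks e he)
    have hvxy : v = x ∨ v = y := by
      rw [hends] at hve
      simpa using hve
    obtain ⟨A, hAv, hAe⟩ : ∃ A : N, A ≠ v ∧ H.ends e = ({A, v} : Finset N) := by
      rcases hvxy with rfl | rfl
      · exact ⟨y, fun h => hxy h.symm, by rw [hends]; exact Finset.pair_comm v y⟩
      · exact ⟨x, hxy, hends⟩
    have hconnS : H.nodeConn ↑C A v := Relation.ReflTransGen.single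
      ⟨e, by exact_mod_cast he, by rw [hAe]; exact Finset.mem_insert_self _ _,
        by rw [hAe]; exact Finset.mem_insert_of_mem (Finset.mem_singleton_self _)⟩
    have hiso : ∀ m ∈ (↑C : Set E) \ {e}, v ∉ H.ends m := by
      rintro m ⟨hm, hme⟩ hvm
      exact hme (huniq m (by exact_mod_cast hm) hvm)
    have hnot : ¬ H.nodeConn ((↑C : Set E) \ {e}) A v :=
      fun hc => hAv (H.nodeConn_isolated hiso hc)
    have hK3 := H.numComponents_add_one_le Set.diff_subset hconnS hnot
    have hcoe : (↑C : Set E) \ {e} = ↑(C.erase e) := by rw [Finset.coe_erase]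
    rw [hcoe] at hK3
    have hkey := (key e he).1
    omega
  -- handshake consequences
  have hsum : ∑ v ∈ H.nodesOf C, H.degreeIn C v = 2 * C.card := by
    rw [H.handshake C]
    have hl : ∀ e ∈ C, (H.ends e).card = 2 := fun e he => hlinks e he
    calc ∑ e ∈ C, (H.ends e).card = ∑ _e ∈ C, 2 := Finset.sum_congr rfl hl
      _ = 2 * C.card := by rw [Finset.sum_const, smul_eq_mul, mul_comm]
  have hmcard : (H.nodesOf C).card ≤ C.card := by
    have h1 : ∑ _v ∈ H.nodesOf C, 2 ≤ ∑ v ∈ H.nodesOf C, H.degreeIn C v :=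
      Finset.sum_le_sum (fun v hv => hdeg2 v hv)
    rw [Finset.sum_const, smul_eq_mul, hsum] at h1
    omega
  -- component decomposition
  have hout : ∀ v : N, v ∉ H.nodesOf C → H.classOf ↑C v = {v} := by
    intro v hv
    ext u
    simp only [classOf, Set.mem_setOf_eq, Set.mem_singleton_iff]
    constructor
    · intro h
      refine H.nodeConn_isolated ?_ h
      intro m hm hvm
      exact hv (Finset.mem_biUnion.mpr ⟨m, by exact_mod_cast hm, hvm⟩)
    · rintro rfl
      exact Relation.ReflTransGen.refl
  have hrange : Set.range (H.classOf ↑C) =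
      (H.classOf ↑C) '' ↑(H.nodesOf C) ∪
        (fun v : N => ({v} : Set N)) '' (↑(H.nodesOf C) : Set N)ᶜ := by
    rw [← Set.image_univ, ← Set.union_compl_self (↑(H.nodesOf C) : Set N), Set.image_union]
    congr 1
    exact Set.image_congr (fun v hv => hout v (by simpa using hv))
  have hdisj : Disjoint ((H.classOf ↑C) '' ↑(H.nodesOf C))
      ((fun v : N => ({v} : Set N)) '' (↑(H.nodesOf C) : Set N)ᶜ) := by
    rw [Set.disjoint_left]
    rintro W ⟨u, hu, rfl⟩ ⟨v, hv, hW⟩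
    have hu' : u ∈ H.classOf ↑C u := Relation.ReflTransGen.refl
    rw [← hW] at hu'
    have huv : u = v := by simpa using hu'
    rw [huv] at hu
    exact hv hu
  have hcompl_card : ((fun v : N => ({v} : Set N)) '' (↑(H.nodesOf C) : Set N)ᶜ).ncard =
      Fintype.card N - (H.nodesOf C).card := by
    rw [Set.ncard_image_of_injective _ Set.singleton_injective, ← Finset.coe_compl,
      Set.ncard_coe_finset, Finset.card_compl]
  have hcC : H.numComponents ↑C =
      ((H.classOf ↑C) '' ↑(H.nodesOf C)).ncard + (Fintype.card N - (H.nodesOf C).card) := by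
    rw [numComponents_eq_ncard, hrange,
      Set.ncard_union_eq hdisj (Set.toFinite _) (Set.toFinite _), hcompl_card]
  have hMne : (H.nodesOf C).Nonempty := by
    obtain ⟨x, y, hxy, hends⟩ := Finset.card_eq_two.mp (hlinks e₁ he₁)
    exact ⟨x, Finset.mem_biUnion.mpr ⟨e₁, he₁, by rw [hends]; exact Finset.mem_insert_self _ _⟩⟩
  have hbpos : 1 ≤ ((H.classOf ↑C) '' ↑(H.nodesOf C)).ncard := by
    have := (Set.ncard_pos (Set.toFinite _)).mpr
      ((Finset.coe_nonempty.mpr hMne).image (H.classOf ↑C))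
    omega
  have hMcard_le : (H.nodesOf C).card ≤ Fintype.card N := Finset.card_le_univ _
  have hb1 : ((H.classOf ↑C) '' ↑(H.nodesOf C)).ncard = 1 ∧ (H.nodesOf C).card = C.card := by
    constructor <;> omega
  have hdeg2' : ∀ v ∈ H.nodesOf C, H.degreeIn C v = 2 := by
    intro v hv
    by_contra hne2
    have hlt : 2 < H.degreeIn C v := lt_of_le_of_ne (hdeg2 v hv) (Ne.symm hne2)
    have hstrict : ∑ _x ∈ H.nodesOf C, 2 < ∑ x ∈ H.nodesOf C, H.degreeIn C x :=
      Finset.sum_lt_sum (fun i hi => hdeg2 i hi) ⟨v, hv, hlt⟩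
    rw [Finset.sum_const, smul_eq_mul, hsum] at hstrict
    have := hb1.2
    omega
  have hconnM : ∀ u w : N, u ∈ H.nodesOf C → w ∈ H.nodesOf C → H.nodeConn ↑C u w := by
    obtain ⟨t, ht⟩ := Set.ncard_eq_one.mp hb1.1
    intro u w hu hw
    have h1 : H.classOf ↑C u ∈ (H.classOf ↑C) '' ↑(H.nodesOf C) :=
      ⟨u, by exact_mod_cast hu, rfl⟩
    have h2 : H.classOf ↑C w ∈ (H.classOf ↑C) '' ↑(H.nodesOf C) :=
      ⟨w, by exact_mod_cast hw, rfl⟩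
    rw [ht] at h1 h2
    have e1 : H.classOf ↑C u = t := h1
    have e2 : H.classOf ↑C w = t := h2
    exact H.classOf_eq_iff.mp (e1.trans e2.symm)
  refine ⟨⟨e₁, he₁⟩, hlinks, ?_, hdeg2'⟩
  refine H.connEdges_of C hconnM ?_
  intro e he
  have hl := hlinks e he
  have h2 : 0 < (H.ends e).card := by
    have : (H.ends e).card = 2 := hl
    omega
  exact Finset.card_pos.mp h2

end MGraph

/-! ## Auxiliary projective geometry lemmas -/

namespace ProjGeom

variable {P : Type*} (G : ProjGeom P)

lemma isFlat_sInter {F : Set (Set P)} (h : ∀ t ∈ F, G.IsFlat t) : G.IsFlat (⋂₀ F) := by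
  intro p hp q hq x hx
  refine Set.mem_sInter.mpr (fun t ht => ?_)
  exact h t ht p (Set.mem_sInter.mp hp t ht) q (Set.mem_sInter.mp hq t ht) hx

lemma isFlat_span (A : Set P) : G.IsFlat (G.span A) :=
  G.isFlat_sInter (fun _ ht => ht.1)

lemma subset_span {A : Set P} : A ⊆ G.span A := fun _ ha =>
  Set.mem_sInter.mpr (fun _ ht => ht.2 ha)

lemma span_le {A t : Set P} (ht : G.IsFlat t) (hA : A ⊆ t) : G.span A ⊆ t :=
  Set.sInter_subset_of_mem ⟨ht, hA⟩

lemma span_mono {A B : Set P} (h : A ⊆ B) : G.span A ⊆ G.span B :=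
  G.span_le (G.isFlat_span B) (h.trans G.subset_span)

lemma isFlat_empty : G.IsFlat (∅ : Set P) := fun p hp => absurd hp (Set.notMem_empty p)

lemma span_empty : G.span (∅ : Set P) = ∅ :=
  Set.subset_empty_iff.mp (G.span_le G.isFlat_empty (subset_refl _))

lemma line_subset_flat {t : Set P} (ht : G.IsFlat t) {p q : P} (hp : p ∈ t) (hq : q ∈ t) :
    G.line p q ⊆ t := ht p hp q hq

lemma mem_line_left {a b c : P} (h : a ∈ G.line b c) (hac : a ≠ c) : b ∈ G.line a c := by
  by_cases hbc : b = c
  · rw [hbc, G.line_self c] at h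
    exact absurd h hac
  · have hline := G.line_unique b c a c hbc h (G.right_mem_line b c) hac
    rw [hline]
    exact G.left_mem_line b c

/-- The cone over a set from a point. -/
def coneSet (p : P) (F : Set P) : Set P := {x | x = p ∨ ∃ q ∈ F, x ∈ G.line p q}

lemma isFlat_coneSet (p : P) {F : Set P} (hF : G.IsFlat F) : G.IsFlat (G.coneSet p F) := by
  by_cases hpF : p ∈ F
  · have hcF : G.coneSet p F = F := by
      apply Set.Subset.antisymm
      · rintro x (rfl | ⟨q, hq, hx⟩)
        · exact hpF
        · exact hF p hpF q hq hx
      · intro q hq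
        exact Or.inr ⟨q, hq, G.right_mem_line p q⟩
    rw [hcF]
    exact hF
  · intro x hx y hy z hz
    rcases hx with hxp | ⟨q, hq, hxq⟩
    · -- x = p
      rw [hxp] at hz
      rcases hy with hyp | ⟨r, hr, hyr⟩
      · rw [hyp, G.line_self] at hz
        exact Or.inl hz
      · by_cases hyp2 : y = p
        · rw [hyp2, G.line_self] at hz
          exact Or.inl hz
        · have hpr : p ≠ r := fun h => hpF (h ▸ hr)
          have hline : G.line p y = G.line p r :=
            G.line_unique p r p y hpr (G.left_mem_line p r) hyr (fun h => hyp2 h.symm)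
          rw [hline] at hz
          exact Or.inr ⟨r, hr, hz⟩
    · rcases hy with hyp | ⟨r, hr, hyr⟩
      · -- y = p
        rw [hyp] at hz
        by_cases hxp2 : x = p
        · rw [hxp2, G.line_self] at hz
          exact Or.inl hz
        · have hpq : p ≠ q := fun h => hpF (h ▸ hq)
          have hline : G.line x p = G.line p q :=
            G.line_unique p q x p hpq hxq (G.left_mem_line p q) hxp2
          rw [hline] at hz
          exact Or.inr ⟨q, hq, hz⟩
      · -- main case
        have hpq : p ≠ q := fun h => hpF (h ▸ hq)
        have hpr : p ≠ r := fun h => hpF (h ▸ hr)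
        by_cases hxy : x = y
        · rw [hxy, G.line_self] at hz
          have hzy : z = y := hz
          rw [hzy]
          exact Or.inr ⟨r, hr, hyr⟩
        by_cases hzx : z = x
        · rw [hzx]
          exact Or.inr ⟨q, hq, hxq⟩
        by_cases hzy : z = y
        · rw [hzy]
          exact Or.inr ⟨r, hr, hyr⟩
        by_cases hzp : z = p
        · exact Or.inl hzp
        by_cases hxp : x = p
        · rw [hxp] at hz
          have hyp3 : y ≠ p := fun h => hxy (hxp.trans h.symm)
          have hline : G.line p y = G.line p r :=
            G.line_unique p r p y hpr (G.left_mem_line p r) hyr (fun h => hyp3 h.symm)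
          rw [hline] at hz
          exact Or.inr ⟨r, hr, hz⟩
        by_cases hyp : y = p
        · rw [hyp] at hz
          have hline : G.line x p = G.line p q :=
            G.line_unique p q x p hpq hxq (G.left_mem_line p q) hxp
          rw [hline] at hz
          exact Or.inr ⟨q, hq, hz⟩
        by_cases hqr : q = r
        · rw [← hqr] at hyr
          have hline : G.line x y = G.line p q :=
            G.line_unique p q x y hpq hxq hyr hxy
          rw [hline] at hz
          exact Or.inr ⟨q, hq, hz⟩
        by_cases hqy : q = y
        · have hxq' : x ∈ G.line p y := by rw [← hqy]; exact hxq
          have hqF : y ∈ F := by rw [← hqy]; exact hq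
          have hline : G.line x y = G.line p y :=
            G.line_unique p y x y (fun h => hyp h.symm) hxq' (G.right_mem_line p y) hxy
          rw [hline] at hz
          exact Or.inr ⟨y, hqF, hz⟩
        -- Veblen, step 1
        have hxzy : x ∈ G.line z y := G.mem_line_left hz hzy
        obtain ⟨w, hw1, hw2⟩ :=
          G.veblen p q z y x hpq hzy (fun h => hzp h.symm) hqy hxq hxzy
        by_cases hwp : w = p
        · -- degenerate: p ∈ line q y
          rw [hwp] at hw2
          have hqy' : G.line q p = G.line q y :=
            G.line_unique q y q p hqy (G.left_mem_line q y) hw2 (fun h => hpq h.symm)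
          have hypq : y ∈ G.line q p := by
            rw [hqy']
            exact G.right_mem_line q y
          rw [G.line_symm] at hypq
          have hl1 : G.line p y = G.line p q :=
            G.line_unique p q p y hpq (G.left_mem_line p q) hypq (fun h => hyp h.symm)
          have hl2 : G.line p y = G.line p r :=
            G.line_unique p r p y hpr (G.left_mem_line p r) hyr (fun h => hyp h.symm)
          have hxpy : x ∈ G.line p y := by
            rw [hl1]
            exact hxq
          have hl3 : G.line x y = G.line p y :=
            G.line_unique p y x y (fun h => hyp h.symm) hxpy (G.right_mem_line p y) hxy
          rw [hl3, hl2] at hz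
          exact Or.inr ⟨r, hr, hz⟩
        by_cases hwq : w = q
        · rw [hwq] at hw1
          have hline : G.line p q = G.line p z :=
            G.line_unique p z p q (fun h => hzp h.symm) (G.left_mem_line p z) hw1 hpq
          refine Or.inr ⟨q, hq, ?_⟩
          rw [hline]
          exact G.right_mem_line p z
        -- Veblen, step 2
        have hyqw : y ∈ G.line q w := by
          have hline : G.line q w = G.line q y :=
            G.line_unique q y q w hqy (G.left_mem_line q y) hw2 (fun h => hwq h.symm)
          rw [hline]
          exact G.right_mem_line q y
        have hyrp : y ∈ G.line r p := by
          rw [G.line_symm]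
          exact hyr
        obtain ⟨s, hs1, hs2⟩ :=
          G.veblen r p q w y (fun h => hpr h.symm) (fun h => hwq h.symm)
            (fun h => hqr h.symm) (fun h => hwp h.symm) hyrp hyqw
        have hsF : s ∈ F := hF r hr q hq hs1
        have hsp : s ≠ p := fun h => hpF (h ▸ hsF)
        have hzpw : z ∈ G.line p w := by
          have hline : G.line p w = G.line p z :=
            G.line_unique p z p w (fun h => hzp h.symm) (G.left_mem_line p z) hw1
              (fun h => hwp h.symm)
          rw [hline]
          exact G.right_mem_line p z
        have hline : G.line p s = G.line p w :=
          G.line_unique p w p s (fun h => hwp h.symm) (G.left_mem_line p w) hs2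
            (fun h => hsp h.symm)
        refine Or.inr ⟨s, hsF, ?_⟩
        rw [hline]
        exact hzpw

lemma span_insert_subset_cone (p : P) (A : Set P) :
    G.span (insert p A) ⊆ G.coneSet p (G.span A) := by
  refine G.span_le (G.isFlat_coneSet p (G.isFlat_span A)) ?_
  intro x hx
  rcases hx with rfl | hx
  · exact Or.inl rfl
  · exact Or.inr ⟨x, G.subset_span hx, G.right_mem_line p x⟩

lemma exchange {A : Set P} {p x : P} (hx : x ∈ G.span (insert p A)) (hxA : x ∉ G.span A) :
    p ∈ G.span (insert x A) := by
  rcases G.span_insert_subset_cone p A hx with rfl | ⟨q, hq, hxq⟩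
  · exact G.subset_span (Set.mem_insert _ _)
  · have hxq' : x ≠ q := fun h => hxA (h ▸ hq)
    have hp : p ∈ G.line x q := G.mem_line_left hxq hxq'
    exact G.isFlat_span (insert x A) x (G.subset_span (Set.mem_insert _ _)) q
      (G.span_mono (Set.subset_insert _ _) hq) hp

lemma indep_empty : G.Indep (∅ : Set P) := fun a ha => absurd ha (Set.notMem_empty a)

lemma indep_subset {A B : Set P} (hB : G.Indep B) (hAB : A ⊆ B) : G.Indep A := by
  intro a ha hsp
  exact hB a (hAB ha) (G.span_mono (Set.diff_subset_diff_left hAB) hsp)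

lemma indep_insert {I : Set P} {x : P} (hI : G.Indep I) (hx : x ∉ G.span I) :
    G.Indep (insert x I) := by
  have hxI : x ∉ I := fun h => hx (G.subset_span h)
  intro a ha hsp
  rcases ha with rfl | haI
  · rw [Set.insert_diff_self_of_notMem hxI] at hsp
    exact hx hsp
  · have hax : a ≠ x := fun h => hxI (h ▸ haI)
    rw [Set.insert_diff_of_notMem _
      (fun h => hax (Set.mem_singleton_iff.mp h).symm)] at hsp
    have hnot : a ∉ G.span (I \ {a}) := hI a haI
    have hxspan : x ∈ G.span (insert a (I \ {a})) := G.exchange hsp hnot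
    rw [Set.insert_diff_singleton, Set.insert_eq_self.mpr haI] at hxspan
    exact hx hxspan

lemma span_eq_span {A B : Set P} (hAB : A ⊆ G.span B) (hBA : B ⊆ G.span A) :
    G.span A = G.span B :=
  Set.Subset.antisymm (G.span_le (G.isFlat_span B) hAB) (G.span_le (G.isFlat_span A) hBA)

lemma span_diff_singleton {A : Set P} {x : P} (hx : x ∈ G.span (A \ {x})) :
    G.span A = G.span (A \ {x}) := by
  apply Set.Subset.antisymm
  · refine G.span_le (G.isFlat_span _) ?_
    intro a ha
    by_cases hax : a = x
    · exact hax ▸ hx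
    · exact G.subset_span ⟨ha, hax⟩
  · exact G.span_mono Set.diff_subset

lemma rank_set_nonempty (A : Set P) :
    Set.Nonempty {n : ℕ | ∃ B : Finset P, ↑B ⊆ A ∧ G.Indep ↑B ∧ B.card = n} :=
  ⟨0, ∅, by simp, by rw [Finset.coe_empty]; exact G.indep_empty, rfl⟩

lemma rank_bddAbove (A : Finset P) :
    BddAbove {n : ℕ | ∃ B : Finset P, ↑B ⊆ (↑A : Set P) ∧ G.Indep ↑B ∧ B.card = n} := by
  refine ⟨A.card, ?_⟩
  rintro n ⟨B, hB, _, rfl⟩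
  exact Finset.card_le_card (by exact_mod_cast hB)

lemma le_rank {A B : Finset P} (hBA : (↑B : Set P) ⊆ ↑A) (hB : G.Indep ↑B) :
    B.card ≤ G.rank ↑A :=
  le_csSup (G.rank_bddAbove A) ⟨B, hBA, hB, rfl⟩

lemma rank_le {A : Finset P} {n : ℕ}
    (h : ∀ B : Finset P, (↑B : Set P) ⊆ ↑A → G.Indep ↑B → B.card ≤ n) : G.rank ↑A ≤ n := by
  refine csSup_le (G.rank_set_nonempty _) ?_
  rintro m ⟨B, hB, hI, rfl⟩
  exact h B hB hI

lemma rank_le_card (A : Finset P) : G.rank ↑A ≤ A.card :=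
  G.rank_le (fun B hB _ => Finset.card_le_card (by exact_mod_cast hB))

lemma rank_mono {A B : Finset P} (h : (↑A : Set P) ⊆ ↑B) : G.rank ↑A ≤ G.rank ↑B :=
  G.rank_le (fun C hC hI => G.le_rank (hC.trans h) hI)

lemma exists_rank_basis (A : Finset P) :
    ∃ B : Finset P, (↑B : Set P) ⊆ ↑A ∧ G.Indep ↑B ∧ B.card = G.rank ↑A :=
  Nat.sSup_mem (G.rank_set_nonempty _) (G.rank_bddAbove A)

lemma rank_eq_card_of_indep {A : Finset P} (h : G.Indep ↑A) : G.rank ↑A = A.card :=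
  le_antisymm (G.rank_le_card A) (G.le_rank (subset_refl _) h)

lemma rank_insert_of_not_mem_span {A : Finset P} {p : P} (hp : p ∉ G.span ↑A) :
    G.rank ↑(insert p A) = G.rank ↑A + 1 := by
  classical
  apply le_antisymm
  · refine G.rank_le ?_
    intro B hB hI
    have h1 : (↑(B.erase p) : Set P) ⊆ ↑A := by
      rw [Finset.coe_erase]
      rintro x ⟨hxB, hxp⟩
      have hx := hB hxB
      rw [Finset.coe_insert] at hx
      rcases hx with rfl | h
      · exact absurd rfl hxp
      · exact h
    have h2 : G.Indep ↑(B.erase p) :=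
      G.indep_subset hI (by rw [Finset.coe_erase]; exact Set.diff_subset)
    have h3 : (B.erase p).card ≤ G.rank ↑A := G.le_rank h1 h2
    by_cases hpB : p ∈ B
    · have h4 := Finset.card_erase_add_one hpB
      omega
    · rw [Finset.erase_eq_of_notMem hpB] at h3
      omega
  · obtain ⟨B, hB, hI, hcard⟩ := G.exists_rank_basis A
    have hpB : p ∉ G.span ↑B := fun h => hp (G.span_mono hB h)
    have hnotB : p ∉ B := fun h => hp (G.subset_span (hB (by exact_mod_cast h)))
    have hI' : G.Indep ↑(insert p B) := by
      rw [Finset.coe_insert]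
      exact G.indep_insert hI hpB
    have hsub : (↑(insert p B) : Set P) ⊆ ↑(insert p A) := by
      rw [Finset.coe_insert, Finset.coe_insert]
      exact Set.insert_subset_insert hB
    have hle := G.le_rank hsub hI'
    rw [Finset.card_insert_of_notMem hnotB, hcard] at hle
    exact hle

lemma rank_insert_of_mem_span {A : Finset P} {p : P} (hp : p ∈ G.span ↑A) :
    G.rank ↑(insert p A) = G.rank ↑A := by
  classical
  apply le_antisymm
  · refine G.rank_le ?_
    intro B hB hI
    by_cases hpB : p ∈ B
    · have hB'A : (↑(B.erase p) : Set P) ⊆ ↑A := by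
        rw [Finset.coe_erase]
        rintro x ⟨hxB, hxp⟩
        have hx := hB hxB
        rw [Finset.coe_insert] at hx
        rcases hx with rfl | h
        · exact absurd rfl hxp
        · exact h
      have hIB' : G.Indep ↑(B.erase p) :=
        G.indep_subset hI (by rw [Finset.coe_erase]; exact Set.diff_subset)
      have hpB' : p ∉ G.span ↑(B.erase p) := by
        rw [Finset.coe_erase]
        exact hI p (by exact_mod_cast hpB)
      have hAnot : ¬ ((↑A : Set P) ⊆ G.span ↑(B.erase p)) := by
        intro hsub
        exact hpB' (G.span_le (G.isFlat_span _) hsub hp)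
      obtain ⟨x, hxA, hxB'⟩ := Set.not_subset.mp hAnot
      have hxnotB' : x ∉ B.erase p := fun h => hxB' (G.subset_span (by exact_mod_cast h))
      have hIx : G.Indep ↑(insert x (B.erase p)) := by
        rw [Finset.coe_insert]
        exact G.indep_insert hIB' hxB'
      have hsub2 : (↑(insert x (B.erase p)) : Set P) ⊆ ↑A := by
        rw [Finset.coe_insert]
        exact Set.insert_subset hxA hB'A
      have hle := G.le_rank hsub2 hIx
      rw [Finset.card_insert_of_notMem hxnotB'] at hle
      have hc : (B.erase p).card + 1 = B.card := Finset.card_erase_add_one hpB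
      omega
    · have hBA : (↑B : Set P) ⊆ ↑A := by
        intro x hxB
        have hx := hB hxB
        rw [Finset.coe_insert] at hx
        rcases hx with rfl | h
        · exact absurd (by exact_mod_cast hxB) hpB
        · exact h
      exact G.le_rank hBA hI
  · exact G.rank_mono (by rw [Finset.coe_insert]; exact Set.subset_insert _ _)

lemma rank_union_eq_of_subset_span (A B : Finset P) :
    (↑B : Set P) ⊆ G.span ↑A → G.rank ↑(A ∪ B) = G.rank ↑A := by
  classical
  induction B using Finset.induction_on with
  | empty =>
    intro _
    rw [Finset.union_empty]
  | @insert b B hb ih =>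
    intro h
    have hb' : b ∈ G.span ↑A := h (by rw [Finset.coe_insert]; exact Set.mem_insert _ _)
    have hB' : (↑B : Set P) ⊆ G.span ↑A := fun x hx =>
      h (by rw [Finset.coe_insert]; exact Set.mem_insert_of_mem _ hx)
    rw [Finset.union_insert]
    have hbspan : b ∈ G.span ↑(A ∪ B) :=
      G.span_mono (by exact_mod_cast (Finset.subset_union_left : A ⊆ A ∪ B)) hb'
    rw [G.rank_insert_of_mem_span hbspan]
    exact ih hB'

lemma rank_eq_of_span_eq {A B : Finset P} (h : G.span ↑A = G.span ↑B) :
    G.rank ↑A = G.rank ↑B := by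
  have h1 : G.rank ↑(A ∪ B) = G.rank ↑A :=
    G.rank_union_eq_of_subset_span A B (by rw [h]; exact G.subset_span)
  have h2 : G.rank ↑(B ∪ A) = G.rank ↑B :=
    G.rank_union_eq_of_subset_span B A (by rw [← h]; exact G.subset_span)
  rw [Finset.union_comm] at h1
  omega

end ProjGeom

/-! ## Statement 12 -/

/-- In the orthographic construction, for every finite edge set
`S` the projective rank of the corresponding point set `Ŝ` equals `rk_Γ(S)` if
`S` is balanced and `rk_Γ(S) + 1` if `S` is unbalanced, where `rk_Γ` is the rank
function of the graphic (cycle) matroid of the constructed graph `Γ`. -/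
theorem stmt12 {P N E' : Type*} [Fintype N] [Nonempty N] (G : ProjGeom P)
    (P' : Set P) (hP' : G.IsHyperplane P')
    (Δ : MGraph N E') (hΔ : Δ.IsSimple)
    (z' : E' → P) (hz'mem : ∀ f : E', z' f ∈ P')
    (hz'inj : Function.Injective z')
    (hz'rep : ∀ S : Finset E', Δ.graphicRk (↑S : Set E') = G.rank (z' '' ↑S))
    (e₀ : P) (he₀ : e₀ ∉ P')
    (Ehat : Set P) (hne : e₀ ∉ Ehat)
    (hE : ∀ x ∈ Ehat, ∃ f : E', x ∈ G.line (z' f) e₀) :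
    ∀ S : Finset ↥Ehat,
      ((G.orthoGraph Δ z' e₀ Ehat hE).IsBalancedSet (G.orthoBal Δ z' e₀ Ehat hE)
          (↑S : Set ↥Ehat) →
        G.rank (Subtype.val '' (↑S : Set ↥Ehat))
          = (G.orthoGraph Δ z' e₀ Ehat hE).graphicRk (↑S : Set ↥Ehat)) ∧
      (¬ (G.orthoGraph Δ z' e₀ Ehat hE).IsBalancedSet (G.orthoBal Δ z' e₀ Ehat hE)
          (↑S : Set ↥Ehat) →
        G.rank (Subtype.val '' (↑S : Set ↥Ehat))
          = (G.orthoGraph Δ z' e₀ Ehat hE).graphicRk (↑S : Set ↥Ehat) + 1)     := by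
  classical
  intro S
  set Γ : MGraph N ↥Ehat := G.orthoGraph Δ z' e₀ Ehat hE with hΓdef
  set π : ↥Ehat → E' := G.orthoProj z' e₀ Ehat hE with hπdef
  have hspec : ∀ eh : ↥Ehat, (eh : P) ∈ G.line (z' (π eh)) e₀ := fun eh => (hE eh eh.2).choose_spec
  have hlinksΓ : ∀ eh : ↥Ehat, Γ.IsLink eh := fun eh => hΔ.1 (π eh)
  -- the graphic rank of Γ agrees with that of Δ under the projection π
  have hrkΓΔ : ∀ T : Finset ↥Ehat,
      Γ.graphicRk (↑T : Set ↥Ehat) = Δ.graphicRk ↑(T.image π) := by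
    intro T
    have hadj : Γ.adjIn ↑T = Δ.adjIn ↑(T.image π) := by
      funext u v
      apply propext
      constructor
      · rintro ⟨eh, heh, h1, h2⟩
        exact ⟨π eh, by exact_mod_cast Finset.mem_image_of_mem π (by exact_mod_cast heh),
          h1, h2⟩
      · rintro ⟨f, hf, h1, h2⟩
        obtain ⟨eh, heh, rfl⟩ := Finset.mem_image.mp (by exact_mod_cast hf)
        exact ⟨eh, by exact_mod_cast heh, h1, h2⟩
    unfold MGraph.graphicRk MGraph.numComponents MGraph.components MGraph.nodeConn
    rw [hadj]
  -- spans coincide after adding e₀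
  have hswap : ∀ T : Finset ↥Ehat,
      G.span ↑(insert e₀ (T.image (Subtype.val : ↥Ehat → P))) =
        G.span ↑(insert e₀ ((T.image π).image z')) := by
    intro T
    apply G.span_eq_span
    · intro x hx
      rw [Finset.coe_insert] at hx
      rcases hx with rfl | hx
      · exact G.subset_span (by rw [Finset.coe_insert]; exact Set.mem_insert _ _)
      · rw [Finset.coe_image] at hx
        obtain ⟨eh, heh, rfl⟩ := hx
        have hz'mem2 : z' (π eh) ∈ (↑(insert e₀ ((T.image π).image z')) : Set P) := by
          rw [Finset.coe_insert]
          refine Set.mem_insert_of_mem _ ?_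
          rw [Finset.coe_image]
          exact ⟨π eh, by rw [Finset.coe_image]; exact ⟨eh, heh, rfl⟩, rfl⟩
        have he₀mem : e₀ ∈ (↑(insert e₀ ((T.image π).image z')) : Set P) := by
          rw [Finset.coe_insert]
          exact Set.mem_insert _ _
        exact G.line_subset_flat (G.isFlat_span _) (G.subset_span hz'mem2)
          (G.subset_span he₀mem) (hspec eh)
    · intro x hx
      rw [Finset.coe_insert] at hx
      rcases hx with rfl | hx
      · exact G.subset_span (by rw [Finset.coe_insert]; exact Set.mem_insert _ _)
      · rw [Finset.coe_image] at hx
        obtain ⟨f, hf, rfl⟩ := hx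
        rw [Finset.coe_image] at hf
        obtain ⟨eh, heh, rfl⟩ := hf
        by_cases heq : (eh : P) = z' (π eh)
        · refine G.subset_span ?_
          rw [Finset.coe_insert]
          refine Set.mem_insert_of_mem _ ?_
          rw [Finset.coe_image]
          exact ⟨eh, heh, heq⟩
        · have hne1 : (eh : P) ≠ e₀ := fun h => hne (h ▸ eh.2)
          have hline : G.line (eh : P) e₀ = G.line (z' (π eh)) e₀ :=
            G.line_unique (z' (π eh)) e₀ (eh : P) e₀ (fun h => he₀ (h ▸ hz'mem (π eh)))
              (hspec eh) (G.right_mem_line _ _) hne1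
          have hz'in : z' (π eh) ∈ G.line (eh : P) e₀ := by
            rw [hline]
            exact G.left_mem_line _ _
          have h1 : (eh : P) ∈ (↑(insert e₀ (T.image (Subtype.val : ↥Ehat → P))) : Set P) := by
            rw [Finset.coe_insert]
            exact Set.mem_insert_of_mem _ (by rw [Finset.coe_image]; exact ⟨eh, heh, rfl⟩)
          have h2 : e₀ ∈ (↑(insert e₀ (T.image (Subtype.val : ↥Ehat → P))) : Set P) := by
            rw [Finset.coe_insert]
            exact Set.mem_insert _ _
          exact G.line_subset_flat (G.isFlat_span _) (G.subset_span h1)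
            (G.subset_span h2) hz'in
  -- the key rank computation
  have hrank4 : ∀ T : Finset ↥Ehat,
      G.rank ↑(insert e₀ (T.image (Subtype.val : ↥Ehat → P))) = Γ.graphicRk ↑T + 1 := by
    intro T
    have h1 := G.rank_eq_of_span_eq (hswap T)
    have hz'span : e₀ ∉ G.span ↑((T.image π).image z') := by
      intro hmem
      refine he₀ (G.span_le hP'.1 ?_ hmem)
      intro x hx
      rw [Finset.coe_image] at hx
      obtain ⟨f, _, rfl⟩ := hx
      exact hz'mem f
    have h2 := G.rank_insert_of_not_mem_span hz'span
    have h3 : G.rank ↑((T.image π).image z') = Δ.graphicRk ↑(T.image π) := by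
      rw [Finset.coe_image]
      exact (hz'rep _).symm
    have h4 := hrkΓΔ T
    rw [h1, h2, h3, ← h4]
  have hScoe : (↑(S.image (Subtype.val : ↥Ehat → P)) : Set P) =
      Subtype.val '' (↑S : Set ↥Ehat) := Finset.coe_image
  by_cases hmem : e₀ ∈ G.span ↑(S.image (Subtype.val : ↥Ehat → P))
  · -- unbalanced case
    have h1 := hrank4 S
    have h2 := G.rank_insert_of_mem_span hmem
    have hrEq : G.rank (Subtype.val '' (↑S : Set ↥Ehat)) = Γ.graphicRk ↑S + 1 := by
      rw [← hScoe]
      omega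
    -- build an unbalanced circle inside S
    set Pfam := S.powerset.filter
      (fun D => e₀ ∈ G.span ↑(D.image (Subtype.val : ↥Ehat → P))) with hPfam
    have hSPfam : S ∈ Pfam := Finset.mem_filter.mpr ⟨Finset.mem_powerset_self _, hmem⟩
    obtain ⟨S₀, hS₀mem, hS₀min⟩ := Finset.exists_min_image Pfam Finset.card ⟨S, hSPfam⟩
    have hS₀S : S₀ ⊆ S := Finset.mem_powerset.mp (Finset.mem_filter.mp hS₀mem).1
    have he₀S₀ : e₀ ∈ G.span ↑(S₀.image (Subtype.val : ↥Ehat → P)) :=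
      (Finset.mem_filter.mp hS₀mem).2
    have hindep : G.Indep (↑(S₀.image (Subtype.val : ↥Ehat → P)) : Set P) := by
      by_contra hcon
      unfold ProjGeom.Indep at hcon
      push_neg at hcon
      obtain ⟨x, hx, hxsp⟩ := hcon
      rw [Finset.coe_image] at hx
      obtain ⟨eh, hehS₀, rfl⟩ := hx
      have himg : (↑(S₀.image (Subtype.val : ↥Ehat → P)) : Set P) \ {(eh : P)} =
          ↑((S₀.erase eh).image (Subtype.val : ↥Ehat → P)) := by
        rw [Finset.image_erase Subtype.val_injective, Finset.coe_erase]
      have hspan := G.span_diff_singleton hxsp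
      have he₀' : e₀ ∈ G.span ↑((S₀.erase eh).image (Subtype.val : ↥Ehat → P)) := by
        rw [← himg, ← hspan]
        exact he₀S₀
      have hmem2 : S₀.erase eh ∈ Pfam := Finset.mem_filter.mpr
        ⟨Finset.mem_powerset.mpr ((Finset.erase_subset _ _).trans hS₀S), he₀'⟩
      have hge := hS₀min _ hmem2
      have hlt := Finset.card_erase_lt_of_mem hehS₀
      omega
    have hS₀ne : S₀.Nonempty := by
      rcases S₀.eq_empty_or_nonempty with rfl | h
      · rw [Finset.image_empty, Finset.coe_empty, G.span_empty] at he₀S₀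
        exact absurd he₀S₀ (Set.notMem_empty _)
      · exact h
    have hr1 := hrank4 S₀
    have hr2 := G.rank_insert_of_mem_span he₀S₀
    have hr3 := G.rank_eq_card_of_indep hindep
    have hr4 : (S₀.image (Subtype.val : ↥Ehat → P)).card = S₀.card :=
      Finset.card_image_of_injective _ Subtype.val_injective
    have hr5 := Γ.numComponents_le_card (↑S₀ : Set ↥Ehat)
    have hr6 : 1 ≤ S₀.card := Finset.card_pos.mpr hS₀ne
    have hr7 : Γ.graphicRk ↑S₀ = Fintype.card N - Γ.numComponents ↑S₀ := rfl
    have hrk₀ : Fintype.card N + 1 = Γ.numComponents ↑S₀ + S₀.card := by omega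
    set Qfam := S₀.powerset.filter
      (fun (D : Finset ↥Ehat) => Fintype.card N < Γ.numComponents ↑D + D.card) with hQfam
    have hS₀Qfam : S₀ ∈ Qfam := Finset.mem_filter.mpr ⟨Finset.mem_powerset_self _, by omega⟩
    obtain ⟨C, hCmem, hCmin⟩ := Finset.exists_min_image Qfam Finset.card ⟨S₀, hS₀Qfam⟩
    have hCS₀ : C ⊆ S₀ := Finset.mem_powerset.mp (Finset.mem_filter.mp hCmem).1
    have hCdep : Fintype.card N < Γ.numComponents ↑C + C.card :=
      (Finset.mem_filter.mp hCmem).2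
    have hCcirc : Γ.IsCircle C := by
      refine Γ.isCircle_of_min C (fun e _ => hlinksΓ e) hCdep ?_
      intro D hDC hDne hdep'
      have hmem' : D ∈ Qfam := Finset.mem_filter.mpr
        ⟨Finset.mem_powerset.mpr (hDC.trans hCS₀), hdep'⟩
      have hge := hCmin _ hmem'
      have hlt : D.card < C.card :=
        Finset.card_lt_card (Finset.ssubset_iff_subset_ne.mpr ⟨hDC, hDne⟩)
      omega
    have hCindep : G.Indep (↑(C.image (Subtype.val : ↥Ehat → P)) : Set P) := by
      refine G.indep_subset hindep ?_
      rw [Finset.coe_image, Finset.coe_image]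
      exact Set.image_mono  (by exact_mod_cast hCS₀)
    have hc1 := hrank4 C
    have hc2 := G.rank_eq_card_of_indep hCindep
    have hc3 : (C.image (Subtype.val : ↥Ehat → P)).card = C.card :=
      Finset.card_image_of_injective _ Subtype.val_injective
    have hc4 := Γ.numComponents_le_card (↑C : Set ↥Ehat)
    have hc5 : G.rank ↑(C.image (Subtype.val : ↥Ehat → P)) ≤
        G.rank ↑(insert e₀ (C.image (Subtype.val : ↥Ehat → P))) :=
      G.rank_mono (by rw [Finset.coe_insert]; exact Set.subset_insert _ _)
    have hc7 : Γ.graphicRk ↑C = Fintype.card N - Γ.numComponents ↑C := rfl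
    have he₀C : e₀ ∈ G.span ↑(C.image (Subtype.val : ↥Ehat → P)) := by
      by_contra hno
      have hc6 := G.rank_insert_of_not_mem_span hno
      omega
    refine ⟨fun hbal => ?_, fun _ => hrEq⟩
    · exfalso
      have hCsubS : (↑C : Set ↥Ehat) ⊆ ↑S := by exact_mod_cast hCS₀.trans hS₀S
      have hCbal := hbal.2 C hCsubS hCcirc
      simp only [ProjGeom.orthoBal, Set.mem_setOf_eq] at hCbal
      refine hCbal.2 ?_
      have hCcoe : (↑(C.image (Subtype.val : ↥Ehat → P)) : Set P) =
          Subtype.val '' (↑C : Set ↥Ehat) := Finset.coe_image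
      rw [← hCcoe]
      exact he₀C
  · -- balanced case
    have h1 := hrank4 S
    have h2 := G.rank_insert_of_not_mem_span hmem
    have hrEq : G.rank (Subtype.val '' (↑S : Set ↥Ehat)) = Γ.graphicRk ↑S := by
      rw [← hScoe]
      omega
    have hbal : Γ.IsBalancedSet (G.orthoBal Δ z' e₀ Ehat hE) (↑S : Set ↥Ehat) := by
      constructor
      · exact fun e _ => hlinksΓ e
      · intro Cc hCcS hCc
        simp only [ProjGeom.orthoBal, Set.mem_setOf_eq]
        refine ⟨hCc, ?_⟩
        intro hsp
        apply hmem
        have hsub : Subtype.val '' (↑Cc : Set ↥Ehat) ⊆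
            ↑(S.image (Subtype.val : ↥Ehat → P)) := by
          rw [hScoe]
          exact Set.image_mono  hCcS
        exact G.span_mono hsub hsp
    exact ⟨fun _ => hrEq, fun hnb => absurd hbal hnb⟩
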